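/- arXiv:2112.10273 — 3 statements merged into one kernel-verified Lean document; each statement's English description precedes it below -/
import Mathlib

section
/- Let A ∈ ℝ^{d×d} be Hurwitz stable (all eigenvalues have negative real part) and invertible. Then the block matrix M(α) = [[A, B],[(αμ/(CA⁻¹B))·C, 0]] at α = 0 has 0 as a simple eigenvalue with left eigenvector u_ℓ = (0,…,0,1) and right eigenvector u_r = (-A⁻¹B, 1)ᵀ, and the first-order perturbation of that zero eigenvalue in α is dλ/dα|_{α=0} = -μ. Consequently, for all sufficiently small α > 0, M(α) is Hurwitz stable. -/
/-!
At `α = 0` the matrix is block upper triangular with diagonal blocks `A` and `0`, which gives the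
eigenvectors and the simplicity of the eigenvalue `0`. For stability, write the lower row of `M(α)`
as `α c` with `c = (μ / C A⁻¹ B) C`, and let `G(z) = c (z - A)⁻¹ B` be the transfer function, so
that `G(0) = -c A⁻¹ B = -μ`. By the Schur complement, a point `z` outside the spectrum of `A` is an
eigenvalue of `M(α)` iff `z = α G(z)`. The eigenvalues of `M(α)`, `0 < α ≤ 1`, are uniformly
bounded, and `G` is continuous on the closed right half-plane because `A` is Hurwitz, hence bounded
on its bounded part. So an eigenvalue `z` with `Re z ≥ 0` would be `O(α)`, thus close to `0` where
`Re G < 0`, and then `Re z = α Re G(z) < 0`.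
-/

open Matrix Topology

theorem Matrix.map_nonsing_inv {R S : Type*} [CommRing R] [CommRing S] {n : Type*} [Fintype n]
    [DecidableEq n] (f : R →+* S) {A : Matrix n n R} (hA : IsUnit A.det) :
    (A.map f)⁻¹ = A⁻¹.map f :=
  inv_eq_left_inv (by
    rw [← Matrix.map_mul, nonsing_inv_mul A hA, Matrix.map_one _ f.map_zero f.map_one])

theorem charpoly_not_isRoot_zero {R : Type*} [CommRing R] {n : Type*} [Fintype n] [DecidableEq n]
    {A : Matrix n n R} (hA : A.det ≠ 0) : ¬ A.charpoly.IsRoot 0 := fun h =>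
  hA (by rw [det_eq_sign_charpoly_coeff, Polynomial.coeff_zero_eq_eval_zero, h.eq_zero, mul_zero])

section BorderedMatrix

variable {R : Type*} [CommRing R] {n : Type*}

def borderedMatrix (A : Matrix n n R) (B C : n → R) : Matrix (n ⊕ Fin 1) (n ⊕ Fin 1) R :=
  fromBlocks A (replicateCol (Fin 1) B) (replicateRow (Fin 1) C) 0

theorem borderedMatrix_smul (A : Matrix n n R) (B C : n → R) (t : R) :
    borderedMatrix A B (t • C) =
      borderedMatrix A B 0 + t • fromBlocks 0 0 (replicateRow (Fin 1) C) 0 := by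
  simp [borderedMatrix, fromBlocks_smul, fromBlocks_add, replicateRow_smul]

theorem borderedMatrix_map {S : Type*} [CommRing S] (f : R →+* S) (A : Matrix n n R)
    (B C : n → R) : (borderedMatrix A B C).map f = borderedMatrix (A.map f) (f ∘ B) (f ∘ C) := by
  ext (i | i) (j | j) <;> simp [borderedMatrix]

theorem sumElim_dotProduct_borderedMatrix_mulVec [Fintype n] (A : Matrix n n R) (B C x : n → R)
    (s : Fin 1 → R) : Sum.elim 0 1 ⬝ᵥ (borderedMatrix A B C *ᵥ Sum.elim x s) = C ⬝ᵥ x := by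
  simp [borderedMatrix, fromBlocks_mulVec, replicateRow_mulVec_eq_const, dotProduct]

theorem borderedMatrix_zero_mulVec [Fintype n] [DecidableEq n] {A : Matrix n n R}
    (hA : IsUnit A.det) (B : n → R) :
    borderedMatrix A B 0 *ᵥ Sum.elim (-(A⁻¹ *ᵥ B)) 1 = 0 := by
  have hB : A *ᵥ (A⁻¹ *ᵥ B) = B := by rw [mulVec_mulVec, mul_nonsing_inv A hA, one_mulVec]
  have hcol : replicateCol (Fin 1) B *ᵥ 1 = B := by ext; simp [mulVec, dotProduct]
  simp [borderedMatrix, fromBlocks_mulVec, mulVec_neg, hB, hcol]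

theorem vecMul_borderedMatrix_zero [Fintype n] (A : Matrix n n R) (B : n → R) (v : Fin 1 → R) :
    Sum.elim 0 v ᵥ* borderedMatrix A B 0 = 0 := by
  ext (j | j) <;> simp [borderedMatrix, vecMul_fromBlocks]

theorem rootMultiplicity_zero_charpoly_borderedMatrix_zero [IsDomain R] [Fintype n]
    [DecidableEq n] {A : Matrix n n R} (hA : A.det ≠ 0) (B : n → R) :
    (borderedMatrix A B 0).charpoly.rootMultiplicity 0 = 1 := by
  have hA0 := charpoly_not_isRoot_zero hA
  have hX : (0 : Matrix (Fin 1) (Fin 1) R).charpoly = Polynomial.X := by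
    simp [charpoly, charmatrix]
  rw [borderedMatrix, replicateRow_zero, charpoly_fromBlocks_zero₂₁, hX,
    Polynomial.rootMultiplicity_mul (mul_ne_zero (fun h => hA0 (by simp [h])) Polynomial.X_ne_zero),
    Polynomial.rootMultiplicity_eq_zero hA0, zero_add]
  simpa using Polynomial.rootMultiplicity_X_sub_C_self (x := (0 : R))

end BorderedMatrix

theorem exists_norm_le_of_mem_spectrum_add_smul {𝕜 A : Type*} [NormedField 𝕜] [NormedRing A]
    [NormedAlgebra 𝕜 A] [CompleteSpace A] (N E : A) :
    ∃ R, ∀ t : 𝕜, ‖t‖ ≤ 1 → ∀ z ∈ spectrum 𝕜 (N + t • E), ‖z‖ ≤ R := by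
  refine ⟨(‖N‖ + ‖E‖) * ‖(1 : A)‖, fun t ht z hz => (spectrum.norm_le_norm_mul_of_mem hz).trans ?_⟩
  gcongr
  calc ‖N + t • E‖ ≤ ‖N‖ + ‖t‖ * ‖E‖ := (norm_add_le _ _).trans (by rw [norm_smul])
    _ ≤ ‖N‖ + ‖E‖ := by gcongr; exact mul_le_of_le_one_left (norm_nonneg E) ht

theorem exists_pos_forall_re_neg_of_eq_mul {h : ℂ → ℂ} (hc : ContinuousOn h {z | 0 ≤ z.re})
    (h0 : (h 0).re < 0) (R : ℝ) :
    ∃ ᾱ > 0, ∀ a : ℝ, 0 < a → a < ᾱ → ∀ z : ℂ, ‖z‖ ≤ R → z = a * h z → z.re < 0 := by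
  obtain ⟨H, hH⟩ := ((isCompact_closedBall (0 : ℂ) R).inter_right
    (isClosed_le continuous_const Complex.continuous_re)).exists_bound_of_continuousOn
    (hc.mono Set.inter_subset_right)
  have hre : ∀ᶠ z in 𝓝[{z | 0 ≤ z.re}] 0, (h z).re < 0 :=
    (Complex.continuous_re.continuousAt.comp_continuousWithinAt
      (hc 0 (by simp))).eventually (gt_mem_nhds h0)
  obtain ⟨δ, hδ, hball⟩ := Metric.mem_nhdsWithin_iff.mp hre
  refine ⟨δ / (|H| + 1), by positivity, fun a ha haδ z hzR hz => ?_⟩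
  by_contra! hz0
  have hzδ : ‖z‖ < δ := calc
    ‖z‖ = a * ‖h z‖ := by
      rw [congrArg norm hz, norm_mul, Complex.norm_real, Real.norm_of_nonneg ha.le]
    _ ≤ a * (|H| + 1) := by
      gcongr; exact (hH z ⟨by simpa using hzR, hz0⟩).trans ((le_abs_self H).trans (by linarith))
    _ < δ := (lt_div_iff₀ (by positivity)).mp haδ
  have hhz : (h z).re < 0 := hball ⟨by simpa using hzδ, hz0⟩
  have hzre : z.re = a * (h z).re := by rw [congrArg Complex.re hz, Complex.re_ofReal_mul]
  nlinarith

section TransferFunction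

variable {K : Type*} [Field K] {n : Type*} [Fintype n] [DecidableEq n]

noncomputable def transferFunction (A : Matrix n n K) (B C : n → K) (z : K) : K :=
  C ⬝ᵥ (z • 1 - A)⁻¹ *ᵥ B

theorem transferFunction_zero {A : Matrix n n K} (hA : IsUnit A.det) (B C : n → K) :
    transferFunction A B C 0 = -(C ⬝ᵥ A⁻¹ *ᵥ B) := by
  have : (-A)⁻¹ = -A⁻¹ := inv_eq_left_inv (by rw [neg_mul_neg, nonsing_inv_mul A hA])
  simp [transferFunction, this, neg_mulVec]

theorem transferFunction_smul_right (A : Matrix n n K) (B C : n → K) (t z : K) :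
    transferFunction A B (t • C) z = t * transferFunction A B C z :=
  smul_dotProduct t C _

theorem det_smul_one_sub_ne_zero {A : Matrix n n K} {z : K} (hz : z ∉ spectrum K A) :
    (z • 1 - A).det ≠ 0 := by
  rwa [spectrum.mem_iff, not_not, Algebra.algebraMap_eq_smul_one, isUnit_iff_isUnit_det,
    isUnit_iff_ne_zero] at hz

theorem map_transferFunction {L : Type*} [Field L] (f : K →+* L) {A : Matrix n n K} {z : K}
    (hz : z ∉ spectrum K A) (B C : n → K) :
    f (transferFunction A B C z) = transferFunction (A.map f) (f ∘ B) (f ∘ C) (f z) := by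
  have hmap : f z • 1 - A.map f = (z • 1 - A).map f := by
    ext i j; by_cases h : i = j <;> simp [one_apply, h]
  rw [transferFunction, transferFunction, hmap,
    map_nonsing_inv f (det_smul_one_sub_ne_zero hz).isUnit, RingHom.map_dotProduct]
  congr 1
  ext i
  exact RingHom.map_mulVec f _ B i

theorem continuousAt_transferFunction [TopologicalSpace K] [IsTopologicalDivisionRing K]
    {A : Matrix n n K} {z : K} (hz : z ∉ spectrum K A) (B C : n → K) :
    ContinuousAt (transferFunction A B C) z := by
  have hinv : ContinuousAt Inv.inv (z • 1 - A) := continuousAt_matrix_inv _ (by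
    rw [Ring.inverse_eq_inv']; exact continuousAt_inv₀ (det_smul_one_sub_ne_zero hz))
  have hres : ContinuousAt (fun w : K => (w • 1 - A)⁻¹) z :=
    hinv.comp (f := fun w : K => w • (1 : Matrix n n K) - A) (by fun_prop)
  unfold transferFunction
  fun_prop

theorem mem_spectrum_borderedMatrix_iff {A : Matrix n n K} {z : K} (hz : z ∉ spectrum K A)
    (B C : n → K) :
    z ∈ spectrum K (borderedMatrix A B C) ↔ z = transferFunction A B C z := by
  have hdet := det_smul_one_sub_ne_zero hz
  let := invertibleOfIsUnitDet _ hdet.isUnit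
  have hsplit : z • 1 - borderedMatrix A B C =
      fromBlocks (z • 1 - A) (-replicateCol (Fin 1) B) (-replicateRow (Fin 1) C) (z • 1) := by
    rw [borderedMatrix, ← fromBlocks_one, fromBlocks_smul, sub_eq_add_neg, fromBlocks_neg,
      fromBlocks_add]
    simp [sub_eq_add_neg]
  rw [spectrum.mem_iff, Algebra.algebraMap_eq_smul_one, hsplit, isUnit_iff_isUnit_det,
    det_fromBlocks₁₁, isUnit_iff_ne_zero, not_not, mul_eq_zero, or_iff_right hdet, det_unique,
    invOf_eq_nonsing_inv, Matrix.sub_apply, sub_eq_zero]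
  rw [transferFunction, dotProduct_mulVec]
  simp [mul_apply, vecMul, dotProduct]

end TransferFunction

section
attribute [local instance] Matrix.linftyOpNormedRing Matrix.linftyOpNormedAlgebra

theorem exists_pos_forall_re_neg_spectrum_borderedMatrix {n : Type*} [Fintype n] [DecidableEq n]
    {A : Matrix n n ℂ} (hA : ∀ z ∈ spectrum ℂ A, z.re < 0) (B C : n → ℂ)
    (hG : (transferFunction A B C 0).re < 0) :
    ∃ ᾱ > 0, ∀ a : ℝ, 0 < a → a < ᾱ → ∀ z ∈ spectrum ℂ (borderedMatrix A B ((a : ℂ) • C)),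
      z.re < 0 := by
  have hA' : ∀ z : ℂ, 0 ≤ z.re → z ∉ spectrum ℂ A := fun z hz hzA => (hA z hzA).not_ge hz
  obtain ⟨R, hR⟩ := exists_norm_le_of_mem_spectrum_add_smul (𝕜 := ℂ) (borderedMatrix A B 0)
    (fromBlocks 0 0 (replicateRow (Fin 1) C) 0)
  obtain ⟨ᾱ, hᾱ, hsmall⟩ := exists_pos_forall_re_neg_of_eq_mul
    (fun z hz => (continuousAt_transferFunction (hA' z hz) B C).continuousWithinAt) hG R
  refine ⟨min ᾱ 1, by positivity, fun a ha0 ha z hz => ?_⟩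
  by_contra! hz0
  have hzR : ‖z‖ ≤ R := hR a (by simpa [abs_of_pos ha0] using (ha.trans_le (min_le_right _ _)).le)
    z (by rwa [← borderedMatrix_smul])
  have hfix : z = a * transferFunction A B C z := by
    rw [← transferFunction_smul_right]
    exact (mem_spectrum_borderedMatrix_iff (hA' z hz0) B _).mp hz
  exact hz0.not_gt (hsmall a ha0 (ha.trans_le (min_le_left _ _)) z hzR hfix)

end

theorem perturbation_of_zero_eigenvalue
    (d : ℕ) (A : Matrix (Fin d) (Fin d) ℝ) (B C : Fin d → ℝ)
    (hA : IsUnit A)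
    (hHurwitz : ∀ z ∈ spectrum ℂ (A.map Complex.ofReal), z.re < 0)
    (hg : C ⬝ᵥ A⁻¹ *ᵥ B ≠ 0) (μ : ℝ) (hμ : 0 < μ)
    (M : ℝ → Matrix (Fin d ⊕ Fin 1) (Fin d ⊕ Fin 1) ℝ)
    (hM : ∀ a, M a = Matrix.fromBlocks A
        (Matrix.of fun i _ => B i)
        (Matrix.of fun _ j => (a * μ / (C ⬝ᵥ A⁻¹ *ᵥ B)) * C j)
        0)
    (uℓ ur : Fin d ⊕ Fin 1 → ℝ)
    (huℓ : uℓ = Sum.elim (0 : Fin d → ℝ) (1 : Fin 1 → ℝ))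
    (hur : ur = Sum.elim (-(A⁻¹ *ᵥ B)) (1 : Fin 1 → ℝ))
    (E : Matrix (Fin d ⊕ Fin 1) (Fin d ⊕ Fin 1) ℝ)
    (hE : E = Matrix.fromBlocks 0 0
        (Matrix.of fun _ j => (μ / (C ⬝ᵥ A⁻¹ *ᵥ B)) * C j) 0) :
    (M 0) *ᵥ ur = 0 ∧
    uℓ ᵥ* (M 0) = 0 ∧
    Polynomial.rootMultiplicity 0 (Matrix.charpoly (M 0)) = 1 ∧
    uℓ ⬝ᵥ ur = 1 ∧
    uℓ ⬝ᵥ (E *ᵥ ur) = -μ ∧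
    ∃ ᾱ > 0, ∀ a : ℝ, 0 < a → a < ᾱ →
      ∀ z ∈ spectrum ℂ ((M a).map Complex.ofReal), z.re < 0 := by
  have hAdet : IsUnit A.det := (isUnit_iff_isUnit_det A).mp hA
  set c := (μ / (C ⬝ᵥ A⁻¹ *ᵥ B)) • C
  have hc : c ⬝ᵥ A⁻¹ *ᵥ B = μ := by rw [smul_dotProduct, smul_eq_mul, div_mul_cancel₀ μ hg]
  have hMc : ∀ a, M a = borderedMatrix A B (a • c) := by
    intro a; rw [hM a, borderedMatrix]; ext (i | i) (j | j) <;> simp [c, mul_div_assoc, mul_assoc]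
  have hE : E = borderedMatrix 0 0 c := by
    rw [hE, borderedMatrix]; ext (i | i) (j | j) <;> simp [c]
  have hG : transferFunction (A.map Complex.ofReal) (Complex.ofReal ∘ B) (Complex.ofReal ∘ c) 0
      = -μ := by
    have h := map_transferFunction Complex.ofRealHom ((spectrum.zero_notMem_iff ℝ).mpr hA) B c
    rw [transferFunction_zero hAdet, hc, map_zero, map_neg, Complex.ofRealHom_eq_coe] at h
    exact h.symm
  refine ⟨?_, ?_, ?_, ?_, ?_, ?_⟩
  · rw [hMc, zero_smul, hur]; exact borderedMatrix_zero_mulVec hAdet B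
  · rw [hMc, zero_smul, huℓ]; exact vecMul_borderedMatrix_zero A B 1
  · rw [hMc, zero_smul]; exact rootMultiplicity_zero_charpoly_borderedMatrix_zero hAdet.ne_zero B
  · simp [huℓ, hur]
  · rw [huℓ, hE, hur, sumElim_dotProduct_borderedMatrix_mulVec, dotProduct_neg, hc]
  · obtain ⟨ᾱ, hᾱ, hstable⟩ := exists_pos_forall_re_neg_spectrum_borderedMatrix hHurwitz
      (Complex.ofReal ∘ B) (Complex.ofReal ∘ c) (by simpa [hG] using hμ)
    refine ⟨ᾱ, hᾱ, fun a ha0 ha => ?_⟩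
    have hMa : (M a).map Complex.ofReal = borderedMatrix (A.map Complex.ofReal)
        (Complex.ofReal ∘ B) ((a : ℂ) • (Complex.ofReal ∘ c)) := by
      rw [hMc]
      exact (borderedMatrix_map Complex.ofRealHom _ _ _).trans (by congr 1; ext; simp)
    exact hMa ▸ hstable a ha0 ha
end

section
/- Suppose (x(t), v(t)) solves ẋ = Ax + Bkv, v̇ = αv(μ - Cx) with μ, α, k > 0, CA⁻¹B ≠ 0, and suppose there exist 0 < a < b such that a < x_i(t) < b for all i and a < v(t) < b for all t ≥ 0. Then the time averages (1/t)∫₀ᵗ x(s)ds and (1/t)∫₀ᵗ v(s)ds converge as t → ∞ to the positive equilibrium x* = A⁻¹Bμ/(CA⁻¹B) and v* = -μ/(CA⁻¹B·k), respectively. -/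
open Matrix Filter Topology Set

/-!
Integrating the equations over `[0, t]` gives
`x t - x 0 = A ∫x + k (∫v) B` and `log v t - log v 0 = α (μ t - C ⬝ᵥ ∫x)`.
Both left-hand sides stay bounded, so after dividing by `t` the averages `X̄, V̄` satisfy
`A X̄ + k V̄ B → 0` and `C ⬝ᵥ X̄ → μ`. Applying `A⁻¹` gives `X̄ + k V̄ A⁻¹B → 0`, and pairing with
`C` (using `C ⬝ᵥ A⁻¹B ≠ 0`) determines the limit of `V̄`, hence that of `X̄`.
-/

theorem LinearMap.intervalIntegral_comp_comm {E F : Type*} [NormedAddCommGroup E]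
    [NormedSpace ℝ E] [FiniteDimensional ℝ E] [NormedAddCommGroup F] [NormedSpace ℝ F]
    [CompleteSpace F] (L : E →ₗ[ℝ] F) {f : ℝ → E} {a b : ℝ}
    (hf : IntervalIntegrable f MeasureTheory.volume a b) :
    ∫ s in a..b, L (f s) = L (∫ s in a..b, f s) :=
  haveI : CompleteSpace E := FiniteDimensional.complete ℝ E
  (LinearMap.toContinuousLinearMap L).intervalIntegral_comp_comm hf

theorem tendsto_inv_smul_sub_zero_of_isBounded {E : Type*} [NormedAddCommGroup E]
    [NormedSpace ℝ E] {f : ℝ → E} {s : Set E} (hs : Bornology.IsBounded s)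
    (hf : ∀ t ≥ (0 : ℝ), f t ∈ s) :
    Tendsto (fun t : ℝ => t⁻¹ • (f t - f 0)) atTop (𝓝 0) := by
  obtain ⟨M, hM⟩ := hs.exists_norm_le
  refine tendsto_inv_atTop_zero.zero_smul_isBoundedUnder_le
    (isBoundedUnder_of_eventually_le (a := M + M) ?_)
  filter_upwards [eventually_ge_atTop 0] with t ht
  exact (norm_sub_le _ _).trans (add_le_add (hM _ (hf t ht)) (hM _ (hf 0 le_rfl)))

theorem sub_eq_mulVec_intervalIntegral_add_smul {n : Type*} [Fintype n]
    {A : Matrix n n ℝ} {B : n → ℝ} {x : ℝ → n → ℝ} {u : ℝ → ℝ} (hu : Continuous u)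
    (hx : ∀ t, HasDerivAt x (A *ᵥ x t + u t • B) t) (t : ℝ) :
    x t - x 0 = A *ᵥ (∫ s in (0 : ℝ)..t, x s) + (∫ s in (0 : ℝ)..t, u s) • B := by
  have hxc : Continuous x := continuous_iff_continuousAt.2 fun s => (hx s).continuousAt
  have hAx : Continuous fun s => A *ᵥ x s := continuous_const.matrix_mulVec hxc
  have huB : Continuous fun s => u s • B := hu.smul continuous_const
  rw [← intervalIntegral.integral_eq_sub_of_hasDerivAt (fun s _ => hx s)
      ((hAx.add huB).intervalIntegrable 0 t),
    intervalIntegral.integral_add (hAx.intervalIntegrable 0 t)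
      (huB.intervalIntegrable 0 t),
    intervalIntegral.integral_smul_const]
  congr 1
  exact A.mulVecLin.intervalIntegral_comp_comm (hxc.intervalIntegrable 0 t)

theorem log_sub_log_eq_intervalIntegral {v g : ℝ → ℝ} {a b : ℝ}
    (hg : IntervalIntegrable g MeasureTheory.volume a b) (hpos : ∀ s ∈ uIcc a b, 0 < v s)
    (hv : ∀ s ∈ uIcc a b, HasDerivAt v (v s * g s) s) :
    Real.log (v b) - Real.log (v a) = ∫ s in a..b, g s := by
  refine (intervalIntegral.integral_eq_sub_of_hasDerivAt (f := fun s => Real.log (v s))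
    (fun s hs => ?_) hg).symm
  have h := (hv s hs).log (hpos s hs).ne'
  rwa [mul_div_cancel_left₀ _ (hpos s hs).ne'] at h

theorem tendsto_of_tendsto_mulVec_add_smul {ι n : Type*} [Fintype n] [DecidableEq n]
    {l : Filter ι} {A : Matrix n n ℝ} {B C : n → ℝ} {k μ : ℝ} {X : ι → n → ℝ} {V : ι → ℝ}
    (hA : IsUnit A) (hg : C ⬝ᵥ A⁻¹ *ᵥ B ≠ 0) (hk : k ≠ 0)
    (hres : Tendsto (fun i => A *ᵥ X i + (k * V i) • B) l (𝓝 0))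
    (hC : Tendsto (fun i => C ⬝ᵥ X i) l (𝓝 μ)) :
    Tendsto X l (𝓝 ((μ / (C ⬝ᵥ A⁻¹ *ᵥ B)) • (A⁻¹ *ᵥ B))) ∧
      Tendsto V l (𝓝 (-μ / ((C ⬝ᵥ A⁻¹ *ᵥ B) * k))) := by
  set w := A⁻¹ *ᵥ B
  set g := C ⬝ᵥ w
  set r := fun i => A⁻¹ *ᵥ (A *ᵥ X i + (k * V i) • B)
  have hr : Tendsto r l (𝓝 0) := by
    exact ((continuous_const.matrix_mulVec continuous_id).tendsto'
      (f := fun y : n → ℝ => A⁻¹ *ᵥ y) 0 0 (mulVec_zero _)).comp hres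
  have hX : ∀ i, X i = r i - (k * V i) • w := fun i => by
    simp only [r, w, mulVec_add, mulVec_smul, mulVec_mulVec,
      nonsing_inv_mul A ((isUnit_iff_isUnit_det A).1 hA), one_mulVec, add_sub_cancel_right]
  have hV : ∀ i, V i = (C ⬝ᵥ r i - C ⬝ᵥ X i) / (g * k) := fun i => by
    rw [hX i, dotProduct_sub, dotProduct_smul, smul_eq_mul]
    field_simp
    ring
  have hVlim : Tendsto V l (𝓝 (-μ / (g * k))) := by
    rw [funext hV, ← zero_sub]
    have hCr : Tendsto (fun i => C ⬝ᵥ r i) l (𝓝 0) := by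
      exact ((continuous_const.dotProduct continuous_id).tendsto'
        (f := fun y : n → ℝ => C ⬝ᵥ y) 0 0 (dotProduct_zero _)).comp hr
    exact (hCr.sub hC).div_const _
  refine ⟨?_, hVlim⟩
  rw [funext hX, show (μ / g) • w = 0 - (k * (-μ / (g * k))) • w by
    rw [zero_sub, ← neg_smul]; congr 1; field_simp]
  exact hr.sub ((hVlim.const_mul k).smul_const w)

section Averages

variable {n : Type*} [Fintype n] {A : Matrix n n ℝ} {B C : n → ℝ} {k α μ : ℝ}
  {x : ℝ → n → ℝ} {v : ℝ → ℝ}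

theorem tendsto_mulVec_average_add_smul_average (hvc : Continuous v)
    (hx : ∀ t, HasDerivAt x (A *ᵥ x t + (k * v t) • B) t) {s : Set (n → ℝ)}
    (hs : Bornology.IsBounded s) (hxs : ∀ t ≥ (0 : ℝ), x t ∈ s) :
    Tendsto (fun t : ℝ => A *ᵥ (t⁻¹ • ∫ s in (0 : ℝ)..t, x s) +
      (k * (t⁻¹ * ∫ s in (0 : ℝ)..t, v s)) • B) atTop (𝓝 0) := by
  refine (tendsto_inv_smul_sub_zero_of_isBounded hs hxs).congr fun t => ?_
  rw [sub_eq_mulVec_intervalIntegral_add_smul (u := fun s => k * v s)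
      (continuous_const.mul hvc) hx,
    intervalIntegral.integral_const_mul, smul_add, mulVec_smul, smul_smul, mul_left_comm]

theorem tendsto_dotProduct_average (hxc : Continuous x)
    (hv : ∀ t, HasDerivAt v (α * v t * (μ - C ⬝ᵥ x t)) t) (hα : α ≠ 0) {a b : ℝ} (ha : 0 < a)
    (hvb : ∀ t ≥ (0 : ℝ), v t ∈ Icc a b) :
    Tendsto (fun t : ℝ => C ⬝ᵥ (t⁻¹ • ∫ s in (0 : ℝ)..t, x s)) atTop (𝓝 μ) := by
  have hlog := tendsto_inv_smul_sub_zero_of_isBounded (f := fun t => Real.log (v t))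
    (Metric.isBounded_Icc (Real.log a) (Real.log b)) fun t ht =>
      ⟨Real.log_le_log ha (hvb t ht).1, Real.log_le_log (ha.trans_le (hvb t ht).1) (hvb t ht).2⟩
  have hlim := (tendsto_const_nhds (x := μ)).sub (hlog.const_mul α⁻¹)
  rw [mul_zero, sub_zero] at hlim
  refine hlim.congr' ?_
  filter_upwards [eventually_gt_atTop 0] with t ht
  have hCx : Continuous fun s => C ⬝ᵥ x s := continuous_const.dotProduct hxc
  have hCint : ∫ s in (0 : ℝ)..t, C ⬝ᵥ x s = C ⬝ᵥ ∫ s in (0 : ℝ)..t, x s :=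
    (dotProductBilin ℝ ℝ C).intervalIntegral_comp_comm (hxc.intervalIntegrable 0 t)
  rw [log_sub_log_eq_intervalIntegral (g := fun s => α * (μ - C ⬝ᵥ x s))
      ((continuous_const.mul (continuous_const.sub hCx)).intervalIntegrable 0 t)
      (fun s hs => (ha.trans_le (hvb s (by rw [uIcc_of_le ht.le] at hs; exact hs.1)).1))
      (fun s _ => (hv s).congr_deriv (by ring)),
    intervalIntegral.integral_const_mul,
    intervalIntegral.integral_sub intervalIntegrable_const (hCx.intervalIntegrable 0 t),
    intervalIntegral.integral_const, hCint, dotProduct_smul, sub_zero]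
  simp only [smul_eq_mul]
  field_simp
  ring

end Averages

theorem time_averages_converge_general
    (d : ℕ) (A : Matrix (Fin d) (Fin d) ℝ) (B C : Fin d → ℝ)
    (hA : IsUnit A) (hg : C ⬝ᵥ A⁻¹ *ᵥ B ≠ 0)
    (k α μ : ℝ) (hk : 0 < k) (hα : 0 < α)
    (x : ℝ → Fin d → ℝ) (v : ℝ → ℝ)
    (hx : ∀ t, ∀ i, HasDerivAt (fun s => x s i) ((A *ᵥ x t + (k * v t) • B) i) t)
    (hv : ∀ t, HasDerivAt v (α * v t * (μ - C ⬝ᵥ x t)) t)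
    (a b : ℝ) (ha : 0 < a)
    (hxb : ∀ t ≥ (0 : ℝ), ∀ i, a < x t i ∧ x t i < b)
    (hvb : ∀ t ≥ (0 : ℝ), a < v t ∧ v t < b) :
    Filter.Tendsto (fun t : ℝ => (1 / t) • ∫ s in (0 : ℝ)..t, x s)
        Filter.atTop (nhds ((μ / (C ⬝ᵥ A⁻¹ *ᵥ B)) • (A⁻¹ *ᵥ B))) ∧
    Filter.Tendsto (fun t : ℝ => (1 / t) * ∫ s in (0 : ℝ)..t, v s)
        Filter.atTop (nhds (-μ / ((C ⬝ᵥ A⁻¹ *ᵥ B) * k))) := by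
  have hx' : ∀ t, HasDerivAt x (A *ᵥ x t + (k * v t) • B) t := fun t => hasDerivAt_pi.2 (hx t)
  have hxc : Continuous x := continuous_iff_continuousAt.2 fun t => (hx' t).continuousAt
  have hvc : Continuous v := continuous_iff_continuousAt.2 fun t => (hv t).continuousAt
  have hres := tendsto_mulVec_average_add_smul_average hvc hx'
    (Metric.isBounded_Icc (fun _ => a) (fun _ => b))
    fun t ht => ⟨fun i => (hxb t ht i).1.le, fun i => (hxb t ht i).2.le⟩
  have hC := tendsto_dotProduct_average hxc hv hα.ne' ha
    fun t ht => ⟨(hvb t ht).1.le, (hvb t ht).2.le⟩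
  simpa only [one_div] using tendsto_of_tendsto_mulVec_add_smul hA hg hk.ne' hres hC

theorem time_averages_converge
    (d : ℕ) (A : Matrix (Fin d) (Fin d) ℝ) (B C : Fin d → ℝ)
    (hA : IsUnit A) (hg : C ⬝ᵥ A⁻¹ *ᵥ B ≠ 0)
    (k α μ : ℝ) (hk : 0 < k) (hα : 0 < α) (hμ : 0 < μ)
    (x : ℝ → Fin d → ℝ) (v : ℝ → ℝ)
    (hx : ∀ t, ∀ i, HasDerivAt (fun s => x s i) ((A *ᵥ x t + (k * v t) • B) i) t)
    (hv : ∀ t, HasDerivAt v (α * v t * (μ - C ⬝ᵥ x t)) t)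
    (a b : ℝ) (ha : 0 < a) (hab : a < b)
    (hxb : ∀ t ≥ (0 : ℝ), ∀ i, a < x t i ∧ x t i < b)
    (hvb : ∀ t ≥ (0 : ℝ), a < v t ∧ v t < b) :
    Filter.Tendsto (fun t : ℝ => (1 / t) • ∫ s in (0 : ℝ)..t, x s)
        Filter.atTop (nhds ((μ / (C ⬝ᵥ A⁻¹ *ᵥ B)) • (A⁻¹ *ᵥ B))) ∧
    Filter.Tendsto (fun t : ℝ => (1 / t) * ∫ s in (0 : ℝ)..t, v s)
        Filter.atTop (nhds (-μ / ((C ⬝ᵥ A⁻¹ *ᵥ B) * k))) :=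
  time_averages_converge_general d A B C hA hg k α μ hk hα x v hx hv a b ha hxb hvb
end

section
/- With a constant disturbance d ∈ ℝ^p entering as ẋ = Ax + Bkv + Ed, v̇ = αv(μ - Cx), the perturbed positive equilibrium is (x*, v*) = (A⁻¹(B(μ + CA⁻¹Ed)/(CA⁻¹B) - Ed), -(μ + CA⁻¹Ed)/(CA⁻¹B·k)), and at this equilibrium Cx* = μ. In particular the equilibrium output value μ is independent of the disturbance d (perfect adaptation). -/
open Matrix

theorem perturbed_positive_equilibrium_perfect_adaptation
    (d p : ℕ) (A : Matrix (Fin d) (Fin d) ℝ) (B C : Fin d → ℝ)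
    (E : Matrix (Fin d) (Fin p) ℝ) (dist : Fin p → ℝ)
    (hA : IsUnit A) (hg : C ⬝ᵥ A⁻¹ *ᵥ B ≠ 0)
    (k α μ : ℝ) (hk : 0 < k) (hα : 0 < α) (hμ : 0 < μ)
    (hadm : 0 < μ + C ⬝ᵥ A⁻¹ *ᵥ (E *ᵥ dist))
    (xs : Fin d → ℝ) (vs : ℝ)
    (hxs : xs = A⁻¹ *ᵥ (((μ + C ⬝ᵥ A⁻¹ *ᵥ (E *ᵥ dist)) / (C ⬝ᵥ A⁻¹ *ᵥ B)) • B
        - E *ᵥ dist))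
    (hvs : vs = -(μ + C ⬝ᵥ A⁻¹ *ᵥ (E *ᵥ dist)) / ((C ⬝ᵥ A⁻¹ *ᵥ B) * k)) :
    A *ᵥ xs + (k * vs) • B + E *ᵥ dist = 0 ∧
    vs * (μ - C ⬝ᵥ xs) = 0 ∧
    C ⬝ᵥ xs = μ := by
  have hdet : IsUnit A.det := (Matrix.isUnit_iff_isUnit_det A).mp hA
  set g := C ⬝ᵥ A⁻¹ *ᵥ B with hgdef
  set e := C ⬝ᵥ A⁻¹ *ᵥ (E *ᵥ dist) with hedef
  have hAinv : ∀ y : Fin d → ℝ, A *ᵥ (A⁻¹ *ᵥ y) = y := by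
    intro y
    rw [Matrix.mulVec_mulVec, Matrix.mul_nonsing_inv A hdet, Matrix.one_mulVec]
  have hCx : C ⬝ᵥ xs = μ := by
    rw [hxs, Matrix.mulVec_sub, Matrix.mulVec_smul, dotProduct_sub, dotProduct_smul,
      ← hgdef, ← hedef, smul_eq_mul, div_mul_cancel₀ _ hg]
    ring
  have hkv : k * vs = -((μ + e) / g) := by
    rw [hvs]; field_simp
  refine ⟨?_, ?_, hCx⟩
  · rw [hxs, hAinv, hkv]
    have : (-((μ + e) / g)) • B = -(((μ + e) / g) • B) := by
      rw [neg_smul]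
    rw [this]
    abel
  · rw [hCx]; ring
end
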